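/- arXiv:2507.15427 — 2 statements merged into one kernel-verified Lean document; each statement's English description precedes it below -/
import Mathlib

section
/- Let κ > ω be regular. Suppose T is a countable complete first-order theory and η ∈ κ^κ is such that M_η ⊨ T, and for every α < κ⁺ there exists ξ ∈ κ^κ with M_ξ ⊨ T, M_ξ ≇ M_η, and M_ξ ≡^α_{κ⁺κ} M_η. Then the orbit Orb(M_η) = {ξ ∈ κ^κ : M_ξ ≅ M_η} is not κ-Borel. -/
open Cardinal Set

universe u v w

namespace GDST

variable {K : Type u} {A : Type v}

/-- The set `N_η` determined by the partial function with domain `Y` and values given by `η`. -/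
def nbhd (Y : Set K) (η : K → A) : Set (K → A) := {ζ | ∀ i ∈ Y, ζ i = η i}

/-- Basic κ-open subsets of `K → K`: sets `N_η` where `η` is a partial function with
domain of size `< #K`, together with the empty set. -/
def IsBasicOpen (S : Set (K → A)) : Prop :=
  (∃ (Y : Set K) (η : K → A), #Y < #K ∧ S = nbhd Y η) ∨ S = ∅

/-- Open in the topology generated by the basic κ-open sets. -/
def IsOpenStd (U : Set (K → A)) : Prop :=
  ∀ ζ ∈ U, ∃ S : Set (K → A), IsBasicOpen S ∧ ζ ∈ S ∧ S ⊆ U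

/-- A union of at most `μ` basic κ-open sets; `(κ,μ)`-open. -/
def IsMuOpen (μ : Cardinal.{u}) (U : Set (K → A)) : Prop :=
  ∃ (ι : Type u) (f : ι → Set (K → A)), #ι ≤ μ ∧ (∀ i, IsBasicOpen (f i)) ∧ U = ⋃ i, f i

/-- `(κ,μ)`-closed: the complement is `(κ,μ)`-open. -/
def IsMuClosed (μ : Cardinal.{u}) (C : Set (K → A)) : Prop := IsMuOpen μ Cᶜ

/-- The `(κ,μ)`-Borel sets: the smallest class containing the basic κ-open sets and closed
under complements and unions and intersections of length at most `μ`. -/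
inductive MuBorel (μ : Cardinal.{u}) : Set (K → A) → Prop
  | basic (S : Set (K → A)) : IsBasicOpen S → MuBorel μ S
  | compl (S : Set (K → A)) : MuBorel μ S → MuBorel μ Sᶜ
  | iUnion (ι : Type u) (f : ι → Set (K → A)) : #ι ≤ μ → (∀ i, MuBorel μ (f i)) →
      MuBorel μ (⋃ i, f i)
  | iInter (ι : Type u) (f : ι → Set (K → A)) : #ι ≤ μ → (∀ i, MuBorel μ (f i)) →
      MuBorel μ (⋂ i, f i)

/-- κ-open: a union of at most `κ = #K` basic κ-open sets. -/
def IsKOpen (U : Set (K → A)) : Prop := IsMuOpen #K U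

/-- κ-closed. -/
def IsKClosed (C : Set (K → A)) : Prop := IsMuClosed #K C

/-- κ-Borel. -/
def KBorel (S : Set (K → A)) : Prop := MuBorel #K S

/- Product space versions, for subsets of `(K → A) × (K → B)`. -/
section Prod

variable {B : Type w}

/-- Basic κ-open subsets of the product: products of basic κ-open sets. -/
def IsBasicOpen2 (S : Set ((K → A) × (K → B))) : Prop :=
  ∃ (S₁ : Set (K → A)) (S₂ : Set (K → B)), IsBasicOpen S₁ ∧ IsBasicOpen S₂ ∧ S = S₁ ×ˢ S₂

def IsOpenStd2 (U : Set ((K → A) × (K → B))) : Prop :=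
  ∀ p ∈ U, ∃ S, IsBasicOpen2 S ∧ p ∈ S ∧ S ⊆ U

def IsMuOpen2 (μ : Cardinal.{u}) (U : Set ((K → A) × (K → B))) : Prop :=
  ∃ (ι : Type u) (f : ι → Set ((K → A) × (K → B))),
    #ι ≤ μ ∧ (∀ i, IsBasicOpen2 (f i)) ∧ U = ⋃ i, f i

def IsMuClosed2 (μ : Cardinal.{u}) (C : Set ((K → A) × (K → B))) : Prop := IsMuOpen2 μ Cᶜ

inductive MuBorel2 (μ : Cardinal.{u}) : Set ((K → A) × (K → B)) → Prop
  | basic (S : Set ((K → A) × (K → B))) : IsBasicOpen2 S → MuBorel2 μ S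
  | compl (S : Set ((K → A) × (K → B))) : MuBorel2 μ S → MuBorel2 μ Sᶜ
  | iUnion (ι : Type u) (f : ι → Set ((K → A) × (K → B))) : #ι ≤ μ → (∀ i, MuBorel2 μ (f i)) →
      MuBorel2 μ (⋃ i, f i)
  | iInter (ι : Type u) (f : ι → Set ((K → A) × (K → B))) : #ι ≤ μ → (∀ i, MuBorel2 μ (f i)) →
      MuBorel2 μ (⋂ i, f i)

def IsKOpen2 (U : Set ((K → A) × (K → B))) : Prop := IsMuOpen2 #K U

def IsKClosed2 (C : Set ((K → A) × (K → B))) : Prop := IsMuClosed2 #K C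

def KBorel2 (S : Set ((K → A) × (K → B))) : Prop := MuBorel2 #K S

/-- κ-Σ¹₁ : projections of κ-Borel subsets of the product. -/
def KSigma11 (S : Set (K → A)) : Prop :=
  ∃ C : Set ((K → A) × (K → A)), KBorel2 C ∧ S = Prod.fst '' C

end Prod

end GDST

namespace GDST

open FirstOrder

/-- The countable relational language with, for each arity n, relation symbols Q_m, m ∈ ℕ. -/
def Lrel : Language := ⟨fun _ => Empty, fun _ => ℕ⟩

variable {K : Type u}

/-- The interpretation of the relation Q_m (of arity n) in the structure coded by η:
Q_m(v) holds iff η(π(m,v)) > 0 (z being the least element of K). -/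
def RelP [LinearOrder K] (z : K) (π : (Σ n : ℕ, ℕ × (Fin n → K)) ≃ K) (η : K → K)
    (n m : ℕ) (v : Fin n → K) : Prop :=
  z < η (π ⟨n, (m, v)⟩)

/-- The Lrel-structure M_η on K coded by η. -/
def Mstr [LinearOrder K] (z : K) (π : (Σ n : ℕ, ℕ × (Fin n → K)) ≃ K) (η : K → K) :
    Lrel.Structure K where
  funMap := fun f _ => f.elim
  RelMap := fun {n} m v => RelP z π η n m v

/-- M_η is a model of the theory T. -/
def ModelsT [LinearOrder K] (z : K) (π : (Σ n : ℕ, ℕ × (Fin n → K)) ≃ K)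
    (T : Lrel.Theory) (η : K → K) : Prop :=
  ∀ φ ∈ T, @FirstOrder.Language.Sentence.Realize Lrel K (Mstr z π η) φ

/-- M_η and M_ξ are isomorphic. -/
def IsoM [LinearOrder K] (z : K) (π : (Σ n : ℕ, ℕ × (Fin n → K)) ≃ K) (η ξ : K → K) : Prop :=
  ∃ σ : K ≃ K, ∀ (n m : ℕ) (v : Fin n → K),
    RelP z π η n m v ↔ RelP z π ξ n m (fun i => σ (v i))

/-- A partial isomorphism between M_η and M_ξ of size < κ, given as a set of pairs. -/
def PIso [LinearOrder K] (z : K) (π : (Σ n : ℕ, ℕ × (Fin n → K)) ≃ K) (η ξ : K → K)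
    (s : Set (K × K)) : Prop :=
  #s < #K ∧
  (∀ p ∈ s, ∀ q ∈ s, (p.1 = q.1 ↔ p.2 = q.2)) ∧
  ∀ (n m : ℕ) (v w : Fin n → K), (∀ i, (v i, w i) ∈ s) →
    (RelP z π η n m v ↔ RelP z π ξ n m w)

/-- M_η ≡^α_{κ⁺κ} M_ξ: equivalence up to quantifier rank α of L_{κ⁺κ}, rendered via the
standard characterization through an α-indexed descending chain of back-and-forth families
of partial isomorphisms of size < κ with the (< κ)-extension property. -/
def EquivRk [LinearOrder K] (z : K) (π : (Σ n : ℕ, ℕ × (Fin n → K)) ≃ K)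
    (a : Ordinal.{u}) (η ξ : K → K) : Prop :=
  ∃ I : Ordinal.{u} → Set (Set (K × K)),
    (∀ b : Ordinal.{u}, ∀ s ∈ I b, PIso z π η ξ s) ∧
    (∅ : Set (K × K)) ∈ I a ∧
    ∀ b c : Ordinal.{u}, c < b → b ≤ a → ∀ s ∈ I b,
      (∀ A : Set K, #A < #K → ∃ s' ∈ I c, s ⊆ s' ∧ A ⊆ Prod.fst '' s') ∧
      (∀ B : Set K, #B < #K → ∃ s' ∈ I c, s ⊆ s' ∧ B ⊆ Prod.snd '' s')

end GDST

/-!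
Every κ-Borel set `B` is decided by forcing with `<κ`-closed conditions that build a generic copy
of a model `M_ξ` (a bijection `σ` of `κ` together with the code `ζ` of the transported structure):
by induction on a Borel code there are `α < κ⁺` and a relation "`p` forces `ζ ∈ B`" which, for
sufficiently generic copies, holds of some condition below the generic iff `ζ ∈ B`, and which is
preserved along back-and-forth systems of depth `α` between two models. By regularity of `κ`, the
union of a chain of fewer than `κ` conditions is again a condition, so below any condition there
are generic copies meeting any `κ` given dense sets.

If the orbit of `M_η` were κ-Borel, some condition over `M_η` would force membership in it. Along
the back-and-forth system of depth `α + 1` between `M_η` and a non-isomorphic `M_ξ`, this condition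
transfers to one over `M_ξ`, so a generic copy of `M_ξ` lies in the orbit: `M_ξ ≅ M_η`.
-/

namespace GDST

open scoped SetRel

section Chains

variable {L : Type u} [CompleteLattice L] {κ : Cardinal.{u}} {G : Set L}

theorem exists_monotone_meets_of_wellFoundedLT {O : Type u} [LinearOrder O] [WellFoundedLT O]
    (hκ : ℵ₀ ≤ κ) (hO : ∀ x : O, #(Iio x) < κ)
    (hG : ∀ C ⊆ G, IsChain (· ≤ ·) C → #C < κ → sSup C ∈ G)
    (D : O → Set L) (hD : ∀ x, ∀ p ∈ G, ∃ q ∈ G, q ∈ D x ∧ p ≤ q) {p₀ : L} (hp₀ : p₀ ∈ G) :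
    ∃ g : O → L, Monotone g ∧ ∀ x, g x ∈ G ∧ g x ∈ D x ∧ p₀ ≤ g x := by
  choose! step hstep using hD
  let g : O → L := WellFoundedLT.fix fun x IH =>
    step x (sSup (insert p₀ (range fun y : Iio x => IH y y.2)))
  have hg : ∀ x, g x = step x (sSup (insert p₀ (range fun y : Iio x => g y))) :=
    WellFoundedLT.fix_eq _
  have key : ∀ x, g x ∈ G ∧ g x ∈ D x ∧ p₀ ≤ g x ∧ ∀ y < x, g y ≤ g x := by
    intro x
    induction x using WellFoundedLT.induction with
    | ind x IH =>
    have hmono : Monotone fun y : Iio x => g y := fun y y' h =>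
      h.eq_or_lt.elim (fun e => e ▸ le_rfl) fun h => (IH y' y'.2).2.2.2 y h
    have hC : sSup (insert p₀ (range fun y : Iio x => g y)) ∈ G := by
      refine hG _ ?_ (hmono.isChain_range.insert fun _ hb _ => .inl ?_) ?_
      · rintro _ (rfl | ⟨y, rfl⟩)
        exacts [hp₀, (IH y y.2).1]
      · obtain ⟨y, rfl⟩ := hb
        exact (IH y y.2).2.2.1
      · exact mk_insert_le.trans_lt
          (add_lt_of_lt hκ (mk_range_le.trans_lt (hO x)) (one_lt_aleph0.trans_le hκ))
    obtain ⟨hxG, hxD, hle⟩ := hstep x _ hC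
    rw [hg x]
    exact ⟨hxG, hxD, (le_sSup (mem_insert _ _)).trans hle,
      fun y hy => (le_sSup (mem_insert_of_mem _ (mem_range_self (⟨y, hy⟩ : Iio x)))).trans hle⟩
  exact ⟨g, fun x y h => h.eq_or_lt.elim (fun e => e ▸ le_rfl) ((key y).2.2.2 x),
    fun x => ⟨(key x).1, (key x).2.1, (key x).2.2.1⟩⟩

theorem exists_isChain_meets (hκ : ℵ₀ ≤ κ)
    (hG : ∀ C ⊆ G, IsChain (· ≤ ·) C → #C < κ → sSup C ∈ G)
    {𝒟 : Set (Set L)} (h𝒟 : #𝒟 ≤ κ) (hD : ∀ D ∈ 𝒟, ∀ p ∈ G, ∃ q ∈ G, q ∈ D ∧ p ≤ q)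
    {p₀ : L} (hp₀ : p₀ ∈ G) :
    ∃ C ⊆ G, IsChain (· ≤ ·) C ∧ p₀ ∈ C ∧ ∀ D ∈ 𝒟, ∃ p ∈ C, p ∈ D := by
  obtain ⟨e⟩ : Nonempty (𝒟 ↪ κ.ord.ToType) := by
    rwa [← Cardinal.le_def, mk_ord_toType]
  let D' := Function.extend e Subtype.val fun _ => univ
  have hD' : ∀ x, ∀ p ∈ G, ∃ q ∈ G, q ∈ D' x ∧ p ≤ q := by
    intro x p hp
    by_cases hx : ∃ D, e D = x
    · obtain ⟨D, rfl⟩ := hx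
      simpa only [D', e.injective.extend_apply] using hD D D.2 p hp
    · exact ⟨p, hp, by simp [D', Function.extend_apply' _ _ _ hx], le_rfl⟩
  obtain ⟨g, hmono, hg⟩ := exists_monotone_meets_of_wellFoundedLT hκ
    (fun x => (mk_Iio_lt x (by simp)).trans_eq (mk_ord_toType κ)) hG D' hD' hp₀
  refine ⟨insert p₀ (range g), ?_,
    hmono.isChain_range.insert fun _ hb _ => .inl ?_, mem_insert _ _,
    fun D hD => ⟨g (e ⟨D, hD⟩), mem_insert_of_mem _ (mem_range_self _), ?_⟩⟩
  · rintro _ (rfl | ⟨x, rfl⟩)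
    exacts [hp₀, (hg x).1]
  · obtain ⟨x, rfl⟩ := hb
    exact (hg x).2.2
  · simpa only [D', e.injective.extend_apply] using (hg (e ⟨D, hD⟩)).2.1

end Chains

lemma succ_lt_ord_succ {c : Cardinal.{u}} (hc : ℵ₀ ≤ c) {α : Ordinal.{u}}
    (hα : α < (Order.succ c).ord) : Order.succ α < (Order.succ c).ord :=
  (isSuccLimit_ord (hc.trans (Order.le_succ _))).succ_lt hα

section Relations

variable {α β γ : Type u}

def IsFunctional (R : SetRel α β) : Prop := ∀ ⦃a b b'⦄, (a, b) ∈ R → (a, b') ∈ R → b = b'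

lemma IsFunctional.mono {R S : SetRel α β} (hS : IsFunctional S) (h : R ⊆ S) :
    IsFunctional R :=
  fun _ _ _ hb hb' => hS (h hb) (h hb')

lemma isFunctional_graph (f : α → β) : IsFunctional f.graph :=
  fun _ _ _ hb hb' => (Function.mem_graph.1 hb).symm.trans hb'

lemma IsFunctional.biUnion {ι : Type*} [Preorder ι] {C : Set ι} {f : ι → SetRel α β}
    (hf : Monotone f) (hC : DirectedOn (· ≤ ·) C) (h : ∀ p ∈ C, IsFunctional (f p)) :
    IsFunctional (⋃ p ∈ C, f p) := by
  intro a b b' hb hb'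
  simp only [mem_iUnion] at hb hb'
  obtain ⟨p, hp, hb⟩ := hb
  obtain ⟨q, hq, hb'⟩ := hb'
  obtain ⟨r, hr, hpr, hqr⟩ := hC p hp q hq
  exact h r hr (hf hpr hb) (hf hqr hb')

lemma IsFunctional.insert {R : SetRel α β} (hR : IsFunctional R) {a : α} (ha : a ∉ R.dom)
    {b : β} : IsFunctional (insert (a, b) R) := by
  intro x c c' hc hc'
  simp only [mem_insert_iff, Prod.mk.injEq] at hc hc'
  rcases hc with ⟨rfl, rfl⟩ | hc <;> rcases hc' with ⟨h, rfl⟩ | hc'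
  · rfl
  · exact absurd ⟨c', hc'⟩ ha
  · exact absurd ⟨c, h ▸ hc⟩ ha
  · exact hR hc hc'

lemma mk_dom_le (R : SetRel α β) : #R.dom ≤ #R := by
  have : R.dom = Prod.fst '' R := by ext; simp
  exact this ▸ mk_image_le

lemma mk_cod_le (R : SetRel α β) : #R.cod ≤ #R := by
  have : R.cod = Prod.snd '' R := by ext; simp
  exact this ▸ mk_image_le

lemma mk_inv (R : SetRel α β) : #R.inv = #R :=
  mk_preimage_equiv (Equiv.prodComm β α) R

lemma mk_comp_lt {κ : Cardinal.{u}} (hκ : ℵ₀ ≤ κ) {R : SetRel α β} {S : SetRel β γ}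
    (hR : #R < κ) (hS : #S < κ) : #(R ○ S) < κ := by
  have : R ○ S ⊆ R.dom ×ˢ S.cod := fun _ ⟨b, hab, hbc⟩ => ⟨⟨b, hab⟩, ⟨b, hbc⟩⟩
  calc #(R ○ S) ≤ #R.dom * #S.cod := by simpa using mk_le_mk_of_subset this
    _ < κ := mul_lt_of_lt hκ ((mk_dom_le R).trans_lt hR) ((mk_cod_le S).trans_lt hS)

lemma mk_insert_lt {κ : Cardinal.{u}} (hκ : ℵ₀ ≤ κ) {s : Set α} (hs : #s < κ) (a : α) :
    #(insert a s : Set α) < κ :=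
  mk_insert_le.trans_lt (add_lt_of_lt hκ hs (one_lt_aleph0.trans_le hκ))

end Relations

section Models

variable {K : Type u} [LinearOrder K] {z : K} {π : (Σ n : ℕ, ℕ × (Fin n → K)) ≃ K}

lemma IsoM.symm {ξ η : K → K} (h : IsoM z π ξ η) : IsoM z π η ξ := by
  obtain ⟨σ, hσ⟩ := h
  exact ⟨σ.symm, fun n m v => by simpa using (hσ n m fun i => σ.symm (v i)).symm⟩

lemma IsoM.trans {ξ η θ : K → K} (h₁ : IsoM z π ξ η) (h₂ : IsoM z π η θ) : IsoM z π ξ θ := by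
  obtain ⟨σ, hσ⟩ := h₁
  obtain ⟨τ, hτ⟩ := h₂
  exact ⟨σ.trans τ, fun n m v => (hσ n m v).trans (hτ n m _)⟩

end Models

section

variable {K : Type u}

/-- A condition for adding a generic copy of `M_ξ`: the first component relates points of `M_ξ` to
points of the copy, the second is a partial code of the copy. -/
abbrev Cond (K : Type u) := SetRel K K × SetRel K K

@[simp] lemma sSup_fst (C : Set (Cond K)) : (sSup C).1 = ⋃ p ∈ C, p.1 := by
  ext; simp [Prod.fst_sSup]

@[simp] lemma sSup_snd (C : Set (Cond K)) : (sSup C).2 = ⋃ p ∈ C, p.2 := by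
  ext; simp [Prod.snd_sSup]

def totalitySets (K : Type u) : Set (Set (Cond K)) :=
  range (fun a => {p : Cond K | a ∈ p.1.dom}) ∪ range (fun b => {p : Cond K | b ∈ p.1.cod}) ∪
    range (fun x => {p : Cond K | x ∈ p.2.dom})

lemma mk_totalitySets_le (hK : ℵ₀ ≤ #K) : #(totalitySets K) ≤ #K :=
  (mk_union_le _ _).trans (add_le_of_le hK
    ((mk_union_le _ _).trans (add_le_of_le hK mk_range_le mk_range_le)) mk_range_le)

section Conditions

variable [LinearOrder K] (z : K) (π : (Σ n : ℕ, ℕ × (Fin n → K)) ≃ K)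

def Coherent (ξ : K → K) (p : Cond K) : Prop :=
  ∀ ⦃n m : ℕ⦄ ⦃w : Fin n → K⦄ ⦃y : K⦄, (π ⟨n, (m, w)⟩, y) ∈ p.2 →
    ∃ v : Fin n → K, (∀ i, (v i, w i) ∈ p.1) ∧ (z < y ↔ RelP z π ξ n m v)

structure IsPrecond (ξ : K → K) (p : Cond K) : Prop where
  isFunctional_fst : IsFunctional p.1
  isFunctional_inv_fst : IsFunctional p.1.inv
  isFunctional_snd : IsFunctional p.2
  coherent : Coherent z π ξ p

structure IsCond (ξ : K → K) (p : Cond K) : Prop extends IsPrecond z π ξ p where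
  mk_fst_lt : #p.1 < #K
  mk_snd_lt : #p.2 < #K

def CondDense (ξ : K → K) (D : Set (Cond K)) : Prop :=
  ∀ p, IsCond z π ξ p → ∃ q, IsCond z π ξ q ∧ q ∈ D ∧ p ≤ q

def graphCond (σ : K ≃ K) (ζ : K → K) : Cond K := ((σ : K → K).graph, ζ.graph)

def IsGeneric (ξ : K → K) (𝒟 : Set (Set (Cond K))) (σ : K ≃ K) (ζ : K → K) : Prop :=
  Coherent z π ξ (graphCond σ ζ) ∧ ∀ D ∈ 𝒟, ∃ p, IsCond z π ξ p ∧ p ∈ D ∧ p ≤ graphCond σ ζ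

variable {z π} {ξ : K → K} {σ : K ≃ K} {ζ : K → K}

lemma coherent_sSup {C : Set (Cond K)} (hC : ∀ p ∈ C, Coherent z π ξ p) :
    Coherent z π ξ (sSup C) := by
  intro n m w y hy
  simp only [sSup_snd, mem_iUnion] at hy
  obtain ⟨p, hp, hy⟩ := hy
  obtain ⟨v, hv, hrel⟩ := hC p hp hy
  exact ⟨v, fun i => (le_sSup hp : p ≤ _).1 (hv i), hrel⟩

lemma IsPrecond.sSup {C : Set (Cond K)} (hC : IsChain (· ≤ ·) C)
    (h : ∀ p ∈ C, IsPrecond z π ξ p) : IsPrecond z π ξ (sSup C) where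
  isFunctional_fst := by
    rw [sSup_fst]
    exact .biUnion monotone_fst hC.directedOn fun p hp => (h p hp).isFunctional_fst
  isFunctional_inv_fst := by
    rw [sSup_fst, SetRel.inv, preimage_iUnion₂]
    exact .biUnion (fun _ _ h => SetRel.inv_mono (monotone_fst h)) hC.directedOn
      fun p hp => (h p hp).isFunctional_inv_fst
  isFunctional_snd := by
    rw [sSup_snd]
    exact .biUnion monotone_snd hC.directedOn fun p hp => (h p hp).isFunctional_snd
  coherent := coherent_sSup fun p hp => (h p hp).coherent

lemma IsCond.sSup (hreg : (#K).IsRegular) {C : Set (Cond K)} (hC : IsChain (· ≤ ·) C)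
    (h : ∀ p ∈ C, IsCond z π ξ p) (hcard : #C < #K) : IsCond z π ξ (sSup C) where
  toIsPrecond := .sSup hC fun p hp => (h p hp).toIsPrecond
  mk_fst_lt := by
    rw [sSup_fst]
    exact (card_biUnion_lt_iff_forall_of_isRegular hreg hcard).2 fun p hp => (h p hp).mk_fst_lt
  mk_snd_lt := by
    rw [sSup_snd]
    exact (card_biUnion_lt_iff_forall_of_isRegular hreg hcard).2 fun p hp => (h p hp).mk_snd_lt

lemma isCond_bot (hK : ℵ₀ ≤ #K) : IsCond z π ξ ⊥ where
  isFunctional_fst _ _ _ h := absurd h (notMem_empty _)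
  isFunctional_inv_fst _ _ _ h := absurd h (notMem_empty _)
  isFunctional_snd _ _ _ h := absurd h (notMem_empty _)
  coherent _ _ _ _ h := absurd h (notMem_empty _)
  mk_fst_lt := by simpa using aleph0_pos.trans_le hK
  mk_snd_lt := by simpa using aleph0_pos.trans_le hK

lemma Coherent.mono_fst {e e' u : SetRel K K} (h : Coherent z π ξ (e, u)) (he : e ⊆ e') :
    Coherent z π ξ (e', u) := fun _ _ _ _ hy =>
  let ⟨v, hv, hrel⟩ := h hy
  ⟨v, fun i => he (hv i), hrel⟩

lemma IsCond.insert_fst (hK : ℵ₀ ≤ #K) {p : Cond K} (hp : IsCond z π ξ p) {a b : K}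
    (ha : a ∉ p.1.dom) (hb : b ∉ p.1.cod) : IsCond z π ξ (insert (a, b) p.1, p.2) where
  isFunctional_fst := hp.isFunctional_fst.insert ha
  isFunctional_inv_fst := by
    have : (insert (a, b) p.1).inv = insert (b, a) p.1.inv := by ext ⟨x, y⟩; simp [and_comm]
    exact this ▸ hp.isFunctional_inv_fst.insert hb
  isFunctional_snd := hp.isFunctional_snd
  coherent := hp.coherent.mono_fst (subset_insert _ _)
  mk_fst_lt := mk_insert_lt hK hp.mk_fst_lt _
  mk_snd_lt := hp.mk_snd_lt

lemma condDense_dom (hK : ℵ₀ ≤ #K) (a : K) : CondDense z π ξ {p | a ∈ p.1.dom} := by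
  intro p hp
  by_cases ha : a ∈ p.1.dom
  · exact ⟨p, hp, ha, le_rfl⟩
  obtain ⟨b, hb⟩ := compl_nonempty_of_mk_lt_mk ((mk_cod_le p.1).trans_lt hp.mk_fst_lt)
  exact ⟨_, hp.insert_fst hK ha hb, ⟨b, mem_insert _ _⟩, subset_insert _ _, le_rfl⟩

lemma condDense_cod (hK : ℵ₀ ≤ #K) (b : K) : CondDense z π ξ {p | b ∈ p.1.cod} := by
  intro p hp
  by_cases hb : b ∈ p.1.cod
  · exact ⟨p, hp, hb, le_rfl⟩
  obtain ⟨a, ha⟩ := compl_nonempty_of_mk_lt_mk ((mk_dom_le p.1).trans_lt hp.mk_fst_lt)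
  exact ⟨_, hp.insert_fst hK ha hb, ⟨a, mem_insert _ _⟩, subset_insert _ _, le_rfl⟩

lemma IsCond.exists_le_finset_subset_cod (hK : ℵ₀ ≤ #K) {p : Cond K} (hp : IsCond z π ξ p)
    (S : Finset K) : ∃ q, IsCond z π ξ q ∧ p ≤ q ∧ ↑S ⊆ q.1.cod := by
  induction S using Finset.induction_on with
  | empty => exact ⟨p, hp, le_rfl, by simp⟩
  | insert b S _ ih =>
    obtain ⟨q, hq, hpq, hS⟩ := ih
    obtain ⟨r, hr, hb, hqr⟩ := condDense_cod hK b q hq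
    exact ⟨r, hr, hpq.trans hqr,
      by simpa [insert_subset_iff] using ⟨hb, hS.trans (SetRel.cod_mono hqr.1)⟩⟩

lemma condDense_val (hK : ℵ₀ ≤ #K) (x : K) : CondDense z π ξ {p | x ∈ p.2.dom} := by
  intro p hp
  obtain ⟨⟨n, m, w⟩, rfl⟩ := π.surjective x
  obtain ⟨q, hq, hpq, hw⟩ := hp.exists_le_finset_subset_cod hK (Finset.univ.image w)
  by_cases hx : π ⟨n, (m, w)⟩ ∈ q.2.dom
  · exact ⟨q, hq, hx, hpq⟩
  choose v hv using fun i => hw (by simp : w i ∈ (Finset.univ.image w : Set K))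
  -- the new value is read off from the code `ξ` of `M_ξ` at the preimage `v` of `w`
  refine ⟨(q.1, insert (π ⟨n, (m, w)⟩, ξ (π ⟨n, (m, v)⟩)) q.2), ⟨⟨hq.isFunctional_fst,
    hq.isFunctional_inv_fst, hq.isFunctional_snd.insert hx, ?_⟩, hq.mk_fst_lt,
    mk_insert_lt hK hq.mk_snd_lt _⟩, ⟨_, mem_insert _ _⟩, hpq.trans ⟨le_rfl, subset_insert _ _⟩⟩
  rintro n' m' w' y (h | h)
  · obtain ⟨h₁, rfl⟩ := Prod.ext_iff.1 h
    cases π.injective h₁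
    exact ⟨v, hv, Iff.rfl⟩
  · exact hq.coherent h

lemma condDense_of_mem_totalitySets (hK : ℵ₀ ≤ #K) {D : Set (Cond K)}
    (hD : D ∈ totalitySets K) : CondDense z π ξ D := by
  rcases hD with (⟨a, rfl⟩ | ⟨b, rfl⟩) | ⟨x, rfl⟩
  exacts [condDense_dom hK a, condDense_cod hK b, condDense_val hK x]

lemma IsPrecond.exists_eq_graphCond {E : Cond K} (hE : IsPrecond z π ξ E)
    (hmeet : ∀ D ∈ totalitySets K, ∃ p ∈ D, p ≤ E) : ∃ σ ζ, E = graphCond σ ζ := by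
  have hdom : ∀ a, a ∈ E.1.dom := fun a =>
    let ⟨_, ha, hp⟩ := hmeet _ (.inl (.inl ⟨a, rfl⟩))
    SetRel.dom_mono hp.1 ha
  have hcod : ∀ b, b ∈ E.1.cod := fun b =>
    let ⟨_, hb, hp⟩ := hmeet _ (.inl (.inr ⟨b, rfl⟩))
    SetRel.cod_mono hp.1 hb
  have hval : ∀ x, x ∈ E.2.dom := fun x =>
    let ⟨_, hx, hp⟩ := hmeet _ (.inr ⟨x, rfl⟩)
    SetRel.dom_mono hp.2 hx
  obtain ⟨f, hf, -⟩ := E.1.exists_graph_eq_iff.2 fun a =>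
    existsUnique_of_exists_of_unique (hdom a) fun _ _ h h' => hE.isFunctional_fst h h'
  obtain ⟨ζ, hζ, -⟩ := E.2.exists_graph_eq_iff.2 fun x =>
    existsUnique_of_exists_of_unique (hval x) fun _ _ h h' => hE.isFunctional_snd h h'
  have hgraph : ∀ a, (a, f a) ∈ E.1 := fun a => hf ▸ rfl
  have hinj : f.Injective := fun a a' h =>
    @hE.isFunctional_inv_fst (f a) a a' (hgraph a) (by rw [h]; exact hgraph a')
  have hsurj : f.Surjective := fun b =>
    let ⟨a, ha⟩ := hcod b
    ⟨a, hE.isFunctional_fst (hgraph a) ha⟩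
  exact ⟨.ofBijective f ⟨hinj, hsurj⟩, ζ, Prod.ext hf.symm hζ.symm⟩

lemma exists_generic (hreg : (#K).IsRegular) {p₀ : Cond K} (hp₀ : IsCond z π ξ p₀)
    {𝒟 : Set (Set (Cond K))} (h𝒟 : #𝒟 ≤ #K) (hD : ∀ D ∈ 𝒟, CondDense z π ξ D) :
    ∃ σ ζ, IsGeneric z π ξ 𝒟 σ ζ ∧ p₀ ≤ graphCond σ ζ := by
  have hK := hreg.aleph0_le
  obtain ⟨C, hCcond, hC, hp₀C, hmeet⟩ := exists_isChain_meets (𝒟 := 𝒟 ∪ totalitySets K) hK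
    (fun C hC hch hcard => IsCond.sSup hreg hch hC hcard)
    ((mk_union_le _ _).trans (add_le_of_le hK h𝒟 (mk_totalitySets_le hK)))
    (by rintro D (hD₀ | hD₀); exacts [hD D hD₀, condDense_of_mem_totalitySets hK hD₀]) hp₀
  have hmeet' : ∀ D ∈ 𝒟 ∪ totalitySets K, ∃ p, IsCond z π ξ p ∧ p ∈ D ∧ p ≤ sSup C :=
    fun D hD =>
      let ⟨p, hpC, hpD⟩ := hmeet D hD
      ⟨p, hCcond hpC, hpD, le_sSup hpC⟩
  have hE : IsPrecond z π ξ (sSup C) := .sSup hC fun p hp => (hCcond hp).toIsPrecond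
  obtain ⟨σ, ζ, hσζ⟩ := hE.exists_eq_graphCond fun D hD =>
    let ⟨p, _, hpD, hp⟩ := hmeet' D (.inr hD)
    ⟨p, hpD, hp⟩
  rw [hσζ] at hE hmeet'
  exact ⟨σ, ζ, ⟨hE.coherent, fun D hD => hmeet' D (.inl hD)⟩, hσζ ▸ le_sSup hp₀C⟩

lemma isoM_of_coherent_graphCond (h : Coherent z π ξ (graphCond σ ζ)) : IsoM z π ξ ζ := by
  refine ⟨σ, fun n m v => ?_⟩
  obtain ⟨v', hv', hrel⟩ := h (show (π ⟨n, (m, fun i => σ (v i))⟩, _) ∈ ζ.graph from rfl)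
  obtain rfl : v' = v := funext fun i => σ.injective (hv' i)
  exact hrel.symm

lemma IsCond.of_le_graphCond {p : Cond K} (hle : p ≤ graphCond σ ζ) (hp : Coherent z π ξ p)
    (h₁ : #p.1 < #K) (h₂ : #p.2 < #K) : IsCond z π ξ p where
  isFunctional_fst := (isFunctional_graph σ).mono hle.1
  isFunctional_inv_fst := by
    have := SetRel.inv_mono hle.1
    rw [graphCond, ← Equiv.graph_inv] at this
    exact (isFunctional_graph σ.symm).mono this
  isFunctional_snd := (isFunctional_graph ζ).mono hle.2
  coherent := hp
  mk_fst_lt := h₁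
  mk_snd_lt := h₂

lemma IsCond.sup_of_le_graphCond (hK : ℵ₀ ≤ #K) {p q : Cond K} (hp : IsCond z π ξ p)
    (hq : IsCond z π ξ q) (hpg : p ≤ graphCond σ ζ) (hqg : q ≤ graphCond σ ζ) :
    IsCond z π ξ (p ⊔ q) :=
  .of_le_graphCond (sup_le hpg hqg)
    (by
      rw [← sSup_pair]
      exact coherent_sSup (by rintro _ (rfl | rfl); exacts [hp.coherent, hq.coherent]))
    ((mk_union_le p.1 q.1).trans_lt (add_lt_of_lt hK hp.mk_fst_lt hq.mk_fst_lt))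
    ((mk_union_le p.2 q.2).trans_lt (add_lt_of_lt hK hp.mk_snd_lt hq.mk_snd_lt))

lemma exists_isCond_le_graphCond (hreg : (#K).IsRegular) (hgen : Coherent z π ξ (graphCond σ ζ))
    {X : Set K} (hX : #X < #K) :
    ∃ p, IsCond z π ξ p ∧ p ≤ graphCond σ ζ ∧ ∀ x ∈ X, (x, ζ x) ∈ p.2 := by
  let V := ⋃ c ∈ π ⁻¹' X, range c.2.2
  have hV : #V < #K := (card_biUnion_lt_iff_forall_of_isRegular hreg
    ((mk_preimage_equiv π X).trans_lt hX)).2 fun _ _ =>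
    (finite_range _).lt_aleph0.trans_le hreg.aleph0_le
  have hle : ((fun b => (σ.symm b, b)) '' V, (fun x => (x, ζ x)) '' X) ≤ graphCond σ ζ := by
    constructor
    · rintro _ ⟨b, -, rfl⟩
      exact σ.apply_symm_apply b
    · rintro _ ⟨x, -, rfl⟩
      rfl
  refine ⟨_, .of_le_graphCond hle ?_ (mk_image_le.trans_lt hV) (mk_image_le.trans_lt hX), hle,
    fun x hx => ⟨x, hx, rfl⟩⟩
  intro n m w y hy
  obtain ⟨x, hx, hxy⟩ := hy
  simp only [Prod.mk.injEq] at hxy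
  obtain ⟨rfl, rfl⟩ := hxy
  obtain ⟨v, hv, hrel⟩ := hgen (show (π ⟨n, (m, w)⟩, ζ (π ⟨n, (m, w)⟩)) ∈ ζ.graph from rfl)
  refine ⟨v, fun i => ⟨w i, ?_, ?_⟩, hrel⟩
  · exact mem_biUnion (show ⟨n, (m, w)⟩ ∈ π ⁻¹' X from hx) (mem_range_self i)
  · rw [← show σ (v i) = w i from hv i]
    simp

lemma condDense_decide (Q : Cond K → Prop) :
    CondDense z π ξ {r | Q r ∨ ∀ q, IsCond z π ξ q → r ≤ q → ¬ Q q} := by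
  intro p hp
  by_cases h : ∃ q, IsCond z π ξ q ∧ p ≤ q ∧ Q q
  · obtain ⟨q, hq, hpq, hQ⟩ := h
    exact ⟨q, hq, .inl hQ, hpq⟩
  · simp only [not_exists, not_and] at h
    exact ⟨p, hp, .inr h, le_rfl⟩

end Conditions

section BackAndForth

/-- `p` and `q` are conditions over two different models, linked by the partial isomorphism `s`
between them. -/
def Corresponds (s : SetRel K K) (p q : Cond K) : Prop :=
  p.2 = q.2 ∧ p.1 ⊆ s ○ q.1 ∧ q.1 ⊆ s.inv ○ p.1

lemma Corresponds.inv {s : SetRel K K} {p q : Cond K} (h : Corresponds s p q) :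
    Corresponds s.inv q p :=
  ⟨h.1.symm, h.2.2, h.2.1⟩

lemma corresponds_bot (s : SetRel K K) : Corresponds s (⊥ : Cond K) ⊥ :=
  ⟨rfl, empty_subset _, empty_subset _⟩

variable [LinearOrder K] (z : K) (π : (Σ n : ℕ, ℕ × (Fin n → K)) ≃ K)

structure BackForth (ξ ζ : K → K) (a : Ordinal.{u}) (I : Ordinal.{u} → Set (SetRel K K)) :
    Prop where
  piso : ∀ b, ∀ s ∈ I b, PIso z π ξ ζ s
  forth : ∀ b c, c < b → b ≤ a → ∀ s ∈ I b, ∀ A : Set K, #A < #K →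
    ∃ s' ∈ I c, s ⊆ s' ∧ A ⊆ Prod.fst '' s'
  back : ∀ b c, c < b → b ≤ a → ∀ s ∈ I b, ∀ B : Set K, #B < #K →
    ∃ s' ∈ I c, s ⊆ s' ∧ B ⊆ Prod.snd '' s'

variable {z π} {ξ ζ : K → K}

lemma PIso.inv {s : SetRel K K} (h : PIso z π ξ ζ s) : PIso z π ζ ξ s.inv :=
  ⟨(mk_inv s).trans_lt h.1, fun _ hp _ hq => (h.2.1 _ hp _ hq).symm,
    fun n m v w hvw => (h.2.2 n m w v hvw).symm⟩

lemma BackForth.inv {a : Ordinal.{u}} {I : Ordinal.{u} → Set (SetRel K K)}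
    (h : BackForth z π ξ ζ a I) : BackForth z π ζ ξ a fun b => SetRel.inv '' I b where
  piso := by
    rintro b _ ⟨s, hs, rfl⟩
    exact (h.piso b s hs).inv
  forth := by
    rintro b c hcb hba _ ⟨s, hs, rfl⟩ A hA
    obtain ⟨s', hs', hss', hA'⟩ := h.back b c hcb hba s hs A hA
    refine ⟨s'.inv, ⟨s', hs', rfl⟩, SetRel.inv_mono hss', fun x hx => ?_⟩
    obtain ⟨⟨a, b⟩, hab, rfl⟩ := hA' hx
    exact ⟨(b, a), hab, rfl⟩
  back := by
    rintro b c hcb hba _ ⟨s, hs, rfl⟩ B hB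
    obtain ⟨s', hs', hss', hB'⟩ := h.forth b c hcb hba s hs B hB
    refine ⟨s'.inv, ⟨s', hs', rfl⟩, SetRel.inv_mono hss', fun x hx => ?_⟩
    obtain ⟨⟨a, b⟩, hab, rfl⟩ := hB' hx
    exact ⟨(b, a), hab, rfl⟩

lemma BackForth.mono {a a' : Ordinal.{u}} {I : Ordinal.{u} → Set (SetRel K K)}
    (h : BackForth z π ξ ζ a I) (ha : a' ≤ a) : BackForth z π ξ ζ a' I :=
  ⟨h.piso, fun b c hcb hba => h.forth b c hcb (hba.trans ha),
    fun b c hcb hba => h.back b c hcb (hba.trans ha)⟩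

/-- A condition `q'` over `M_ζ` extending `q` is pulled back along the system to a condition over
`M_ξ`: its first component is `s' ○ q'.1` for a partial isomorphism `s'` one level down whose range
covers the domain of `q'.1`. -/
lemma BackForth.lift (hK : ℵ₀ ≤ #K) {b c : Ordinal.{u}}
    {I : Ordinal.{u} → Set (SetRel K K)} (hS : BackForth z π ξ ζ b I) (hcb : c < b)
    {s : SetRel K K} (hs : s ∈ I b) {p q q' : Cond K} (hm : Corresponds s p q)
    (hq' : IsCond z π ζ q') (hle : q ≤ q') :
    ∃ s' ∈ I c, ∃ p', IsCond z π ξ p' ∧ p ≤ p' ∧ Corresponds s' p' q' := by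
  obtain ⟨s', hs', hss', hcov⟩ :=
    hS.back b c hcb le_rfl s hs _ ((mk_dom_le q'.1).trans_lt hq'.mk_fst_lt)
  have hiso := hS.piso c s' hs'
  have hcov' : q'.1 ⊆ s'.inv ○ (s' ○ q'.1) := by
    rintro ⟨d', y⟩ h
    obtain ⟨⟨d, _⟩, hd, rfl⟩ := hcov ⟨y, h⟩
    exact ⟨d, hd, _, hd, h⟩
  refine ⟨s', hs', (s' ○ q'.1, q'.2), ⟨⟨?_, ?_, hq'.isFunctional_snd, ?_⟩,
    mk_comp_lt hK hiso.1 hq'.mk_fst_lt, hq'.mk_snd_lt⟩, ⟨?_, hm.1 ▸ hle.2⟩, rfl, subset_rfl, hcov'⟩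
  · rintro d y y' ⟨d₁, h₁, h₁'⟩ ⟨d₂, h₂, h₂'⟩
    obtain rfl : d₁ = d₂ := (hiso.2.1 _ h₁ _ h₂).1 rfl
    exact hq'.isFunctional_fst h₁' h₂'
  · rintro y d d' ⟨d₁, h₁, h₁'⟩ ⟨d₂, h₂, h₂'⟩
    obtain rfl : d₁ = d₂ := hq'.isFunctional_inv_fst h₁' h₂'
    exact (hiso.2.1 _ h₁ _ h₂).2 rfl
  · intro n m w y hy
    obtain ⟨v', hv', hrel⟩ := hq'.coherent hy
    choose v hv using fun i => hcov' (hv' i)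
    exact ⟨v, fun i => (hv i).2, hrel.trans (hiso.2.2 n m v v' fun i => (hv i).1).symm⟩
  · rintro ⟨d, y⟩ h
    obtain ⟨d', h₁, h₂⟩ := hm.2.1 h
    exact ⟨d', hss' h₁, hle.1 h₂⟩

end BackAndForth

section Forcing

variable [LinearOrder K] (z : K) (π : (Σ n : ℕ, ℕ × (Fin n → K)) ≃ K)

/-- `P ξ p` reads "`p` forces the generic copy of `M_ξ` into `B`"; it is invariant along
back-and-forth systems of depth `α`. -/
structure IsForcingRel (B : Set (K → K)) (α : Ordinal.{u}) (P : (K → K) → Cond K → Prop) :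
    Prop where
  mono : ∀ ξ p q, p ≤ q → P ξ p → P ξ q
  decides : ∀ ξ, ∃ 𝒟 : Set (Set (Cond K)), #𝒟 ≤ #K ∧ (∀ D ∈ 𝒟, CondDense z π ξ D) ∧
    ∀ σ ζ, IsGeneric z π ξ 𝒟 σ ζ → (ζ ∈ B ↔ ∃ p, IsCond z π ξ p ∧ p ≤ graphCond σ ζ ∧ P ξ p)
  invariant : ∀ ξ ζ b I, α ≤ b → BackForth z π ξ ζ b I → ∀ s ∈ I b, ∀ p q,
    Corresponds s p q → (P ξ p ↔ P ζ q)

def Forceable (B : Set (K → K)) : Prop :=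
  ∃ α < (Order.succ #K).ord, ∃ P, IsForcingRel z π B α P

variable {z π} {B : Set (K → K)} {α : Ordinal.{u}} {P : (K → K) → Cond K → Prop}

lemma isForcingRel_nbhd (hreg : (#K).IsRegular) {Y : Set K} (hY : #Y < #K) (ν : K → K) :
    IsForcingRel z π (nbhd Y ν) 0 fun _ p => ∀ x ∈ Y, (x, ν x) ∈ p.2 where
  mono _ _ _ hpq h x hx := hpq.2 (h x hx)
  decides ξ := by
    refine ⟨∅, by simp, by simp, fun σ ζ hgen => ⟨fun hζ => ?_, ?_⟩⟩
    · obtain ⟨p, hp, hpg, hY'⟩ := exists_isCond_le_graphCond hreg hgen.1 hY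
      exact ⟨p, hp, hpg, fun x hx => hζ x hx ▸ hY' x hx⟩
    · rintro ⟨p, -, hpg, hp⟩ x hx
      exact hpg.2 (hp x hx)
  invariant _ _ _ _ _ _ _ _ _ _ hm := hm.1 ▸ Iff.rfl

lemma IsForcingRel.compl (hK : ℵ₀ ≤ #K) (h : IsForcingRel z π B α P) :
    IsForcingRel z π Bᶜ (Order.succ α) fun ξ p => ∀ q, IsCond z π ξ q → p ≤ q → ¬ P ξ q where
  mono _ _ _ hpq h r hr hqr := h r hr (hpq.trans hqr)
  decides ξ := by
    obtain ⟨𝒟, h𝒟, hD, hdec⟩ := h.decides ξ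
    refine ⟨insert {r | P ξ r ∨ ∀ q, IsCond z π ξ q → r ≤ q → ¬ P ξ q} 𝒟,
      mk_insert_le.trans (add_le_of_le hK h𝒟 (one_le_aleph0.trans hK)), ?_, fun σ ζ hgen => ?_⟩
    · rintro D (rfl | hD')
      exacts [condDense_decide _, hD D hD']
    have hgen' : IsGeneric z π ξ 𝒟 σ ζ := ⟨hgen.1, fun D hD' => hgen.2 D (mem_insert_of_mem _ hD')⟩
    constructor
    · intro hζ
      obtain ⟨r, hr, hPr | hneg, hrg⟩ := hgen.2 _ (mem_insert _ _)
      · exact absurd ((hdec σ ζ hgen').2 ⟨r, hr, hrg, hPr⟩) hζ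
      · exact ⟨r, hr, hrg, hneg⟩
    · rintro ⟨p, hp, hpg, hneg⟩ hζ
      obtain ⟨q, hq, hqg, hPq⟩ := (hdec σ ζ hgen').1 hζ
      exact hneg _ (hp.sup_of_le_graphCond hK hq hpg hqg) le_sup_left
        (h.mono ξ q _ le_sup_right hPq)
  invariant := by
    -- one direction suffices: the other is the same statement for the inverse system
    have key : ∀ ξ ζ b I, Order.succ α ≤ b → BackForth z π ξ ζ b I → ∀ s ∈ I b, ∀ p q,
        Corresponds s p q → (∀ p', IsCond z π ξ p' → p ≤ p' → ¬ P ξ p') →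
          ∀ q', IsCond z π ζ q' → q ≤ q' → ¬ P ζ q' := by
      intro ξ ζ b I hb hS s hs p q hm hp q' hq' hqq' hPq'
      have hαb : α < b := Order.succ_le_iff.1 hb
      obtain ⟨s', hs', p', hp', hpp', hm'⟩ := hS.lift hK hαb hs hm hq' hqq'
      exact hp p' hp' hpp' ((h.invariant ξ ζ α I le_rfl (hS.mono hαb.le) s' hs' p' q' hm').2 hPq')
    exact fun ξ ζ b I hb hS s hs p q hm =>
      ⟨key ξ ζ b I hb hS s hs p q hm, key ζ ξ b _ hb hS.inv _ ⟨s, hs, rfl⟩ q p hm.inv⟩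

lemma isForcingRel_iUnion (hK : ℵ₀ ≤ #K) {ι : Type u} (hι : #ι ≤ #K) {f : ι → Set (K → K)}
    {α : ι → Ordinal.{u}} {P : ι → (K → K) → Cond K → Prop}
    (h : ∀ i, IsForcingRel z π (f i) (α i) (P i)) :
    IsForcingRel z π (⋃ i, f i) (⨆ i, α i) fun ξ p => ∃ i, P i ξ p where
  mono ξ p q hpq := fun ⟨i, hi⟩ => ⟨i, (h i).mono ξ p q hpq hi⟩
  decides ξ := by
    choose 𝒟 h𝒟 hD hdec using fun i => (h i).decides ξ
    refine ⟨⋃ i, 𝒟 i, ?_, fun D hD' => ?_, fun σ ζ hgen => ?_⟩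
    · exact (mk_iUnion_le _).trans ((mul_le_mul' hι (ciSup_le' h𝒟)).trans (mul_eq_self hK).le)
    · obtain ⟨i, hi⟩ := mem_iUnion.1 hD'
      exact hD i D hi
    · have hgen' : ∀ i, IsGeneric z π ξ (𝒟 i) σ ζ := fun i =>
        ⟨hgen.1, fun D hD => hgen.2 D (mem_iUnion_of_mem i hD)⟩
      simp only [mem_iUnion, fun i => hdec i σ ζ (hgen' i)]
      exact ⟨fun ⟨i, p, hp, hpg, hP⟩ => ⟨p, hp, hpg, i, hP⟩,
        fun ⟨p, hp, hpg, i, hP⟩ => ⟨i, p, hp, hpg, hP⟩⟩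
  invariant ξ ζ b I hb hS s hs p q hm := exists_congr fun i =>
    (h i).invariant ξ ζ b I ((Ordinal.le_iSup α i).trans hb) hS s hs p q hm

lemma forceable_nbhd (hreg : (#K).IsRegular) {Y : Set K} (hY : #Y < #K) (ν : K → K) :
    Forceable z π (nbhd Y ν) :=
  ⟨0, (isSuccLimit_ord (hreg.aleph0_le.trans (Order.le_succ _))).pos, _,
    isForcingRel_nbhd hreg hY ν⟩

lemma Forceable.compl (hK : ℵ₀ ≤ #K) (h : Forceable z π B) : Forceable z π Bᶜ :=
  let ⟨α, hα, _, hP⟩ := h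
  ⟨Order.succ α, succ_lt_ord_succ hK hα, _, hP.compl hK⟩

lemma Forceable.iUnion (hK : ℵ₀ ≤ #K) {ι : Type u} (hι : #ι ≤ #K) {f : ι → Set (K → K)}
    (h : ∀ i, Forceable z π (f i)) : Forceable z π (⋃ i, f i) := by
  choose α hα P hP using h
  refine ⟨⨆ i, α i, Ordinal.iSup_lt_of_lt_cof ?_ hα, _, isForcingRel_iUnion hK hι hP⟩
  rw [(isRegular_succ hK).cof_ord]
  exact hι.trans_lt (Order.lt_succ _)

lemma forceable_of_kBorel (hreg : (#K).IsRegular) (hB : KBorel B) : Forceable z π B := by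
  have hK := hreg.aleph0_le
  induction hB with
  | basic S hS =>
    obtain ⟨Y, ν, hY, rfl⟩ | rfl := hS
    · exact forceable_nbhd hreg hY ν
    · have h : (∅ : Set (K → K)) = (nbhd ∅ id)ᶜ := by simp [nbhd]
      exact h ▸ (forceable_nbhd hreg (by simpa using aleph0_pos.trans_le hK) id).compl hK
  | compl S _ ih => exact ih.compl hK
  | iUnion ι f hι _ ih => exact .iUnion hK hι ih
  | iInter ι f hι _ ih =>
    rw [← compl_compl (⋂ i, f i), compl_iInter]
    exact (Forceable.iUnion hK hι fun i => (ih i).compl hK).compl hK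

lemma IsForcingRel.exists_forces (hreg : (#K).IsRegular) (h : IsForcingRel z π B α P) {ξ : K → K}
    (hB : ∀ ζ, IsoM z π ξ ζ → ζ ∈ B) : ∃ p, IsCond z π ξ p ∧ P ξ p := by
  obtain ⟨𝒟, h𝒟, hD, hdec⟩ := h.decides ξ
  obtain ⟨σ, ζ, hgen, -⟩ := exists_generic hreg (isCond_bot hreg.aleph0_le) h𝒟 hD
  obtain ⟨p, hp, -, hP⟩ := (hdec σ ζ hgen).1 (hB ζ (isoM_of_coherent_graphCond hgen.1))
  exact ⟨p, hp, hP⟩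

lemma IsForcingRel.exists_mem_isoM (hreg : (#K).IsRegular) (h : IsForcingRel z π B α P)
    {ξ : K → K} {p : Cond K} (hp : IsCond z π ξ p) (hP : P ξ p) : ∃ ζ ∈ B, IsoM z π ξ ζ := by
  obtain ⟨𝒟, h𝒟, hD, hdec⟩ := h.decides ξ
  obtain ⟨σ, ζ, hgen, hpg⟩ := exists_generic hreg hp h𝒟 hD
  exact ⟨ζ, (hdec σ ζ hgen).2 ⟨p, hp, hpg, hP⟩, isoM_of_coherent_graphCond hgen.1⟩

lemma IsForcingRel.transfer (hK : ℵ₀ ≤ #K) (h : IsForcingRel z π B α P) {ξ ζ : K → K}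
    (hequiv : EquivRk z π (Order.succ α) ξ ζ) {q : Cond K} (hq : IsCond z π ζ q) (hP : P ζ q) :
    ∃ p, IsCond z π ξ p ∧ P ξ p := by
  obtain ⟨I, hpiso, h₀, hext⟩ := hequiv
  have hS : BackForth z π ξ ζ (Order.succ α) I :=
    ⟨hpiso, fun b c hcb hba s hs => (hext b c hcb hba s hs).1,
      fun b c hcb hba s hs => (hext b c hcb hba s hs).2⟩
  obtain ⟨s, hs, p, hp, -, hm⟩ :=
    hS.lift hK (Order.lt_succ α) h₀ (corresponds_bot ∅) hq bot_le
  exact ⟨p, hp, (h.invariant ξ ζ α I le_rfl (hS.mono (Order.le_succ α)) s hs p q hm).2 hP⟩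

end Forcing

end

theorem statement16_general (K : Type u) [LinearOrder K]
    (hreg : (#K).IsRegular)
    (z : K) (π : (Σ n : ℕ, ℕ × (Fin n → K)) ≃ K)
    (T : Lrel.Theory)
    (η : K → K)
    (hyp : ∀ a : Ordinal.{u}, a < (Order.succ (#K)).ord →
      ∃ ξ : K → K, ModelsT z π T ξ ∧ ¬ IsoM z π ξ η ∧ EquivRk z π a ξ η) :
    ¬ KBorel {ξ : K → K | IsoM z π ξ η} := by
  intro hB
  obtain ⟨α, hα, P, hP⟩ := forceable_of_kBorel (z := z) (π := π) hreg hB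
  obtain ⟨q, hq, hPq⟩ := hP.exists_forces hreg fun ζ h => h.symm
  obtain ⟨ξ, -, hniso, hequiv⟩ := hyp (Order.succ α) (succ_lt_ord_succ hreg.aleph0_le hα)
  obtain ⟨p, hp, hPp⟩ := hP.transfer hreg.aleph0_le hequiv hq hPq
  obtain ⟨ζ, hζ, hiso⟩ := hP.exists_mem_isoM hreg hp hPp
  exact hniso (hiso.trans hζ)

/-- Let κ > ω be regular, T a complete first-order theory and η a code of
a model of T of size κ such that for every α < κ⁺ there is a code ξ of a model of T
non-isomorphic to M_η but L_{κ⁺κ}-equivalent to M_η up to quantifier rank α. Then the orbit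
of M_η in κ^κ is not κ-Borel. -/
theorem statement16 (K : Type u) [LinearOrder K]
    (hreg : (#K).IsRegular) (hunc : ℵ₀ < #K)
    (z : K) (hz : ∀ x : K, z ≤ x) (π : (Σ n : ℕ, ℕ × (Fin n → K)) ≃ K)
    (T : Lrel.Theory) (hT : T.IsComplete)
    (η : K → K) (hη : ModelsT z π T η)
    (hyp : ∀ a : Ordinal.{u}, a < (Order.succ (#K)).ord →
      ∃ ξ : K → K, ModelsT z π T ξ ∧ ¬ IsoM z π ξ η ∧ EquivRk z π a ξ η) :
    ¬ KBorel {ξ : K → K | IsoM z π ξ η} :=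
  statement16_general K hreg z π T η hyp

end GDST
end

section
/- Let κ be a regular uncountable cardinal. There is a (κ,κ⁺)-Borel subset of κ^κ × κ^κ that is universal for the (κ,κ)-Borel subsets of κ^κ, assuming for each α < κ⁺ a κ-Borel set R_α ⊆ κ^κ × κ^κ universal for κ-Σ_α is given. Consequently (by a diagonal argument) there is a (κ,κ⁺)-Borel set that is not (κ,κ)-Borel. -/
open Cardinal Set

universe u v w

namespace GDST

variable (K : Type u)

/-- Even ordinals: limit (or zero) plus an even finite number. -/
def OrdEven (a : Ordinal.{u}) : Prop :=
  ∃ (b : Ordinal.{u}) (n : ℕ), (b = 0 ∨ Order.IsSuccLimit b) ∧ a = b + 2 * n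

/-- The basic sets of level zero of the hierarchy: N_{(i,j)}. -/
def SigBasic : Set (Set (K → K)) := {S | ∃ i j : K, S = {ζ : K → K | ζ i = j}}

open Classical in
/-- The hierarchy κ-Σ_α: level 0 is the basic sets N_{(i,j)}; at a successor of an even
ordinal take κ-unions, at a successor of an odd ordinal take κ-intersections; at limits
take unions of the previous levels. -/
noncomputable def Sig : Ordinal.{u} → Set (Set (K → K)) := fun a =>
  if a = 0 then SigBasic K
  else if h : ∃ b : Ordinal.{u}, a = b + 1 then
    have hb : h.choose < a := by
      conv_rhs => rw [h.choose_spec]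
      simp
    if OrdEven h.choose then
      {S | ∃ f : K → Set (K → K), (∀ i, f i ∈ Sig h.choose) ∧ S = ⋃ i, f i}
    else
      {S | ∃ f : K → Set (K → K), (∀ i, f i ∈ Sig h.choose) ∧ S = ⋂ i, f i}
  else {S | ∃ b : Ordinal.{u}, ∃ _ : b < a, S ∈ Sig b}
termination_by a => a

/-!
Every κ-Borel set lies, together with its complement, in a level κ-Σ_α with α < κ⁺: the levels
increase, a κ-union or κ-intersection of sets of level α has level α + 2 (of the steps to α + 1
and to α + 2 one takes unions and the other intersections), and κ⁺ is regular. Choosing distinct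
codes `c_α ∈ κ^κ` for the κ⁺ ≤ 2^κ levels and splitting κ into two halves, a parameter ξ is read
as a pair (code `c_α`, parameter for `R_α`); the union over α of the `R_α` recoded in this way is
a κ⁺-union of κ-Borel sets and is universal for the κ-Borel sets. Diagonalising against it,
`{η | (η, η) ∉ U}` is (κ,κ⁺)-Borel but not κ-Borel.
-/

theorem OrdEven.two_dvd {a : Ordinal.{u}} (h : OrdEven a) : (2 : Ordinal.{u}) ∣ a := by
  obtain ⟨b, n, hb, rfl⟩ := h
  have hω : Ordinal.omega0 ∣ b := Ordinal.isSuccPrelimit_iff_omega0_dvd.mp <|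
    hb.elim (fun h => h ▸ Order.isSuccPrelimit_bot) Order.IsSuccLimit.isSuccPrelimit
  exact dvd_add ⟨b, (Ordinal.mul_omega0_dvd (by norm_num) (Ordinal.natCast_lt_omega0 2) hω).symm⟩
    (dvd_mul_right _ _)

theorem not_ordEven_add_one {a : Ordinal.{u}} (h : OrdEven a) : ¬ OrdEven (a + 1) := by
  intro h'
  obtain ⟨c, rfl⟩ := h.two_dvd
  obtain ⟨d, hd⟩ := h'.two_dvd
  have := congrArg (· % 2) hd
  rw [Ordinal.mul_add_mod_self, ← add_zero (2 * d), Ordinal.mul_add_mod_self,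
    Ordinal.mod_eq_of_lt one_lt_two, Ordinal.zero_mod] at this
  exact one_ne_zero this

theorem ordEven_or_ordEven_add_one (a : Ordinal.{u}) : OrdEven a ∨ OrdEven (a + 1) := by
  induction a using Ordinal.limitRecOn with
  | zero => exact Or.inl ⟨0, 0, Or.inl rfl, by simp⟩
  | add_one b ih =>
    refine ih.symm.imp id fun ⟨c, n, hc, hb⟩ => ⟨c, n + 1, hc, ?_⟩
    rw [hb, add_assoc, add_assoc, one_add_one_eq_two]
    push_cast
    rw [mul_add, mul_one]
  | limit b hb _ => exact Or.inl ⟨b, 0, Or.inr hb, by simp⟩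

theorem ordEven_add_one_iff {a : Ordinal.{u}} : OrdEven (a + 1) ↔ ¬ OrdEven a :=
  ⟨fun h h' => not_ordEven_add_one h' h, (ordEven_or_ordEven_add_one a).resolve_left⟩

section Levels

variable {K}

theorem Sig_zero : Sig K 0 = SigBasic K := by
  rw [Sig, if_pos rfl]

open Classical in
theorem Sig_add_one (a : Ordinal.{u}) :
    Sig K (a + 1) = if OrdEven a then
      {S | ∃ f : K → Set (K → K), (∀ i, f i ∈ Sig K a) ∧ S = ⋃ i, f i}
    else
      {S | ∃ f : K → Set (K → K), (∀ i, f i ∈ Sig K a) ∧ S = ⋂ i, f i} := by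
  have h : ∃ b : Ordinal.{u}, a + 1 = b + 1 := ⟨a, rfl⟩
  have hchoose : h.choose = a := (Order.add_one_inj.mp h.choose_spec).symm
  rw [Sig, if_neg (add_pos_of_right one_pos a).ne', dif_pos h]
  simp only [hchoose]

theorem Sig_of_isSuccLimit {a : Ordinal.{u}} (ha : Order.IsSuccLimit a) :
    Sig K a = {S | ∃ b < a, S ∈ Sig K b} := by
  rw [Sig, if_neg (show a ≠ 0 from ha.ne_bot), dif_neg]
  · simp
  · rintro ⟨b, rfl⟩
    exact Order.not_isSuccLimit_succ b (Order.succ_eq_add_one b ▸ ha)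

theorem Sig_mono [Nonempty K] : Monotone (Sig K) := by
  intro b a hba
  induction a using Ordinal.limitRecOn with
  | zero => rw [nonpos_iff_eq_zero.mp hba]
  | add_one a ih =>
    rcases hba.lt_or_eq with hlt | rfl
    · intro S hS
      have hSa := ih (Order.lt_add_one_iff.mp hlt) hS
      rw [Sig_add_one]
      split_ifs
      · exact ⟨fun _ => S, fun _ => hSa, (iUnion_const S).symm⟩
      · exact ⟨fun _ => S, fun _ => hSa, (iInter_const S).symm⟩
    · exact le_rfl
  | limit a ha _ =>
    rcases hba.lt_or_eq with hlt | rfl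
    · rw [Sig_of_isSuccLimit ha]
      exact fun S hS => ⟨b, hlt, hS⟩
    · exact le_rfl

theorem exists_surjective_of_mk_le {ι : Type u} [Nonempty ι] (h : #ι ≤ #K) :
    ∃ s : K → ι, s.Surjective :=
  let ⟨e⟩ := (Cardinal.le_def ι K).mp h
  ⟨Function.invFun e, Function.invFun_surjective e.injective⟩

section Family

variable {ι : Type u} [Nonempty ι] {f : ι → Set (K → K)} {a : Ordinal.{u}}

theorem iUnion_mem_Sig_add_one (hι : #ι ≤ #K) (ha : OrdEven a) (hf : ∀ i, f i ∈ Sig K a) :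
    ⋃ i, f i ∈ Sig K (a + 1) := by
  obtain ⟨s, hs⟩ := exists_surjective_of_mk_le hι
  rw [Sig_add_one, if_pos ha]
  exact ⟨f ∘ s, fun k => hf (s k), (hs.iUnion_comp f).symm⟩

theorem iInter_mem_Sig_add_one (hι : #ι ≤ #K) (ha : ¬ OrdEven a) (hf : ∀ i, f i ∈ Sig K a) :
    ⋂ i, f i ∈ Sig K (a + 1) := by
  obtain ⟨s, hs⟩ := exists_surjective_of_mk_le hι
  rw [Sig_add_one, if_neg ha]
  exact ⟨f ∘ s, fun k => hf (s k), (hs.iInter_comp f).symm⟩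

variable [Nonempty K]

theorem iUnion_mem_Sig_add_two (hι : #ι ≤ #K) (hf : ∀ i, f i ∈ Sig K a) :
    ⋃ i, f i ∈ Sig K (a + 1 + 1) := by
  by_cases ha : OrdEven a
  · exact Sig_mono le_self_add (iUnion_mem_Sig_add_one hι ha hf)
  · exact iUnion_mem_Sig_add_one hι (ordEven_add_one_iff.mpr ha)
      fun i => Sig_mono le_self_add (hf i)

theorem iInter_mem_Sig_add_two (hι : #ι ≤ #K) (hf : ∀ i, f i ∈ Sig K a) :
    ⋂ i, f i ∈ Sig K (a + 1 + 1) := by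
  by_cases ha : OrdEven a
  · exact iInter_mem_Sig_add_one hι (not_ordEven_add_one ha)
      fun i => Sig_mono le_self_add (hf i)
  · exact Sig_mono le_self_add (iInter_mem_Sig_add_one hι ha hf)

end Family

end Levels

def sigHierarchy : Set (Set (K → K)) := {S | ∃ a < (Order.succ #K).ord, S ∈ Sig K a}

theorem isSuccLimit_ord_succ_mk [Infinite K] : Order.IsSuccLimit (Order.succ #K).ord :=
  Cardinal.isSuccLimit_ord ((Cardinal.aleph0_le_mk K).trans (Order.le_succ _))

section Hierarchy

variable {K} {ι : Type u} {f : ι → Set (K → K)}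

theorem setOf_apply_eq_mem_sigHierarchy (i j : K) : {ζ : K → K | ζ i = j} ∈ sigHierarchy K :=
  ⟨0, Cardinal.ord_pos.mpr (Order.bot_lt_succ _), Sig_zero ▸ ⟨i, j, rfl⟩⟩

variable [Infinite K]

theorem exists_lt_ord_succ_forall_mem_Sig (hι : #ι ≤ #K) (hf : ∀ i, f i ∈ sigHierarchy K) :
    ∃ a < (Order.succ #K).ord, ∀ i, f i ∈ Sig K a := by
  choose a ha hfa using hf
  refine ⟨⨆ i, a i, Ordinal.iSup_lt_of_lt_cof ?_ ha,
    fun i => Sig_mono (Ordinal.le_iSup a i) (hfa i)⟩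
  rw [(Cardinal.isRegular_succ (Cardinal.aleph0_le_mk K)).cof_ord]
  exact Order.lt_succ_of_le hι

theorem add_two_lt_ord_succ_mk {a : Ordinal.{u}} (ha : a < (Order.succ #K).ord) :
    a + 1 + 1 < (Order.succ #K).ord :=
  (isSuccLimit_ord_succ_mk K).add_one_lt ((isSuccLimit_ord_succ_mk K).add_one_lt ha)

theorem iUnion_mem_sigHierarchy_of_nonempty [Nonempty ι] (hι : #ι ≤ #K)
    (hf : ∀ i, f i ∈ sigHierarchy K) : ⋃ i, f i ∈ sigHierarchy K :=
  let ⟨a, ha, hfa⟩ := exists_lt_ord_succ_forall_mem_Sig hι hf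
  ⟨a + 1 + 1, add_two_lt_ord_succ_mk ha, iUnion_mem_Sig_add_two hι hfa⟩

theorem iInter_mem_sigHierarchy_of_nonempty [Nonempty ι] (hι : #ι ≤ #K)
    (hf : ∀ i, f i ∈ sigHierarchy K) : ⋂ i, f i ∈ sigHierarchy K :=
  let ⟨a, ha, hfa⟩ := exists_lt_ord_succ_forall_mem_Sig hι hf
  ⟨a + 1 + 1, add_two_lt_ord_succ_mk ha, iInter_mem_Sig_add_two hι hfa⟩

theorem univ_mem_sigHierarchy : (univ : Set (K → K)) ∈ sigHierarchy K := by
  obtain ⟨i⟩ := (inferInstance : Nonempty K)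
  have h : (univ : Set (K → K)) = ⋃ j, {ζ : K → K | ζ i = j} :=
    (iUnion_eq_univ_iff.mpr fun ζ => ⟨ζ i, rfl⟩).symm
  exact h ▸ iUnion_mem_sigHierarchy_of_nonempty le_rfl (setOf_apply_eq_mem_sigHierarchy i)

theorem empty_mem_sigHierarchy : (∅ : Set (K → K)) ∈ sigHierarchy K := by
  obtain ⟨i⟩ := (inferInstance : Nonempty K)
  have h : (∅ : Set (K → K)) = ⋂ j, {ζ : K → K | ζ i = j} := by
    refine (iInter_eq_empty_iff.mpr fun ζ => ?_).symm
    obtain ⟨j, hj⟩ := exists_ne (ζ i)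
    exact ⟨j, hj.symm⟩
  exact h ▸ iInter_mem_sigHierarchy_of_nonempty le_rfl (setOf_apply_eq_mem_sigHierarchy i)

theorem iUnion_mem_sigHierarchy (hι : #ι ≤ #K) (hf : ∀ i, f i ∈ sigHierarchy K) :
    ⋃ i, f i ∈ sigHierarchy K := by
  rcases isEmpty_or_nonempty ι with hι₀ | hι₀
  · simpa only [iUnion_of_empty] using empty_mem_sigHierarchy
  · exact iUnion_mem_sigHierarchy_of_nonempty hι hf

theorem iInter_mem_sigHierarchy (hι : #ι ≤ #K) (hf : ∀ i, f i ∈ sigHierarchy K) :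
    ⋂ i, f i ∈ sigHierarchy K := by
  rcases isEmpty_or_nonempty ι with hι₀ | hι₀
  · simpa only [iInter_of_empty] using univ_mem_sigHierarchy
  · exact iInter_mem_sigHierarchy_of_nonempty hι hf

theorem setOf_apply_ne_mem_sigHierarchy (i j : K) : {ζ : K → K | ζ i ≠ j} ∈ sigHierarchy K := by
  have h : {ζ : K → K | ζ i ≠ j} = ⋃ j' : {j' // j' ≠ j}, {ζ : K → K | ζ i = j'} := by
    ext ζ
    simp
  exact h ▸ iUnion_mem_sigHierarchy (mk_subtype_le _)
    fun j' => setOf_apply_eq_mem_sigHierarchy i j'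

theorem nbhd_mem_sigHierarchy (Y : Set K) (η : K → K) : nbhd Y η ∈ sigHierarchy K := by
  have h : nbhd Y η = ⋂ i : Y, {ζ : K → K | ζ i = η i} := by
    ext ζ
    simp [nbhd]
  exact h ▸ iInter_mem_sigHierarchy (mk_set_le Y) fun i => setOf_apply_eq_mem_sigHierarchy i.1 _

theorem compl_nbhd_mem_sigHierarchy (Y : Set K) (η : K → K) : (nbhd Y η)ᶜ ∈ sigHierarchy K := by
  have h : (nbhd Y η)ᶜ = ⋃ i : Y, {ζ : K → K | ζ i ≠ η i} := by
    ext ζ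
    simp [nbhd]
  exact h ▸ iUnion_mem_sigHierarchy (mk_set_le Y) fun i => setOf_apply_ne_mem_sigHierarchy i.1 _

theorem IsBasicOpen.mem_sigHierarchy {S : Set (K → K)} (hS : IsBasicOpen S) :
    S ∈ sigHierarchy K ∧ Sᶜ ∈ sigHierarchy K := by
  rcases hS with ⟨Y, η, -, rfl⟩ | rfl
  · exact ⟨nbhd_mem_sigHierarchy Y η, compl_nbhd_mem_sigHierarchy Y η⟩
  · exact ⟨empty_mem_sigHierarchy, compl_empty (α := K → K) ▸ univ_mem_sigHierarchy⟩

theorem MuBorel.mem_sigHierarchy {S : Set (K → K)} (hS : MuBorel #K S) :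
    S ∈ sigHierarchy K ∧ Sᶜ ∈ sigHierarchy K := by
  induction hS with
  | basic S hS => exact hS.mem_sigHierarchy
  | compl S _ ih => exact ⟨ih.2, (compl_compl S).symm ▸ ih.1⟩
  | iUnion ι f hι _ ih =>
    exact ⟨iUnion_mem_sigHierarchy hι fun i => (ih i).1,
      compl_iUnion f ▸ iInter_mem_sigHierarchy hι fun i => (ih i).2⟩
  | iInter ι f hι _ ih =>
    exact ⟨iInter_mem_sigHierarchy hι fun i => (ih i).1,
      compl_iInter f ▸ iUnion_mem_sigHierarchy hι fun i => (ih i).2⟩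

end Hierarchy

section BasicOpen

variable {K : Type u} {A : Type v}

theorem isBasicOpen_univ [Nonempty K] : IsBasicOpen (univ : Set (K → A)) := by
  rcases isEmpty_or_nonempty (K → A) with h | ⟨⟨η⟩⟩
  · exact Or.inr (univ_eq_empty_iff.mpr h)
  · exact Or.inl ⟨∅, η, by simpa using (mk_ne_zero K).bot_lt, by simp [nbhd]⟩

theorem isBasicOpen_setOf_apply_eq [Infinite K] (k : K) (a : A) :
    IsBasicOpen {ζ : K → A | ζ k = a} :=
  Or.inl ⟨{k}, fun _ => a, by simpa using Cardinal.one_lt_aleph0.trans_le (aleph0_le_mk K),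
    by simp [nbhd]⟩

theorem IsBasicOpen.inter [Infinite K] {S T : Set (K → A)} (hS : IsBasicOpen S)
    (hT : IsBasicOpen T) : IsBasicOpen (S ∩ T) := by
  classical
  rcases hS with ⟨Y, η, hY, rfl⟩ | rfl
  · rcases hT with ⟨Z, θ, hZ, rfl⟩ | rfl
    · by_cases hagree : ∀ i ∈ Y ∩ Z, η i = θ i
      · refine Or.inl ⟨Y ∪ Z, fun i => if i ∈ Y then η i else θ i,
          (mk_union_le Y Z).trans_lt (add_lt_of_lt (aleph0_le_mk K) hY hZ), ?_⟩
        ext ζ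
        simp only [nbhd, mem_inter_iff, mem_union]
        constructor
        · rintro ⟨hζY, hζZ⟩ i (hi | hi)
          · rw [if_pos hi, hζY i hi]
          · split_ifs with hiY
            · exact hζY i hiY
            · exact hζZ i hi
        · intro h
          refine ⟨fun i hi => by simpa [hi] using h i (Or.inl hi), fun i hi => ?_⟩
          by_cases hiY : i ∈ Y
          · simpa [hiY, hagree i ⟨hiY, hi⟩] using h i (Or.inl hiY)
          · simpa [hiY] using h i (Or.inr hi)
      · push Not at hagree
        obtain ⟨i, ⟨hiY, hiZ⟩, hne⟩ := hagree
        refine Or.inr (eq_empty_of_forall_notMem fun ζ ⟨hζY, hζZ⟩ => hne ?_)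
        exact (hζY i hiY).symm.trans (hζZ i hiZ)
    · exact Or.inr (inter_empty _)
  · exact Or.inr (empty_inter _)

theorem IsBasicOpen.preimage_comp {g : K → K} (hg : g.Injective) {S : Set (K → A)}
    (hS : IsBasicOpen S) : IsBasicOpen ((· ∘ g) ⁻¹' S) := by
  rcases hS with ⟨Y, η, hY, rfl⟩ | rfl
  · refine Or.inl ⟨g '' Y, Function.extend g η η, mk_image_le.trans_lt hY, ?_⟩
    ext ζ
    simp [nbhd, hg.extend_apply]
  · exact Or.inr (preimage_empty)

end BasicOpen

section Pullback

variable {K : Type u} {A : Type v} {B : Type w} {A' : Type*} {B' : Type*} {μ : Cardinal.{u}}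

theorem MuBorel2.mono {μ' : Cardinal.{u}} (h : μ ≤ μ') {S : Set ((K → A) × (K → B))}
    (hS : MuBorel2 μ S) : MuBorel2 μ' S := by
  induction hS with
  | basic S hS => exact .basic S hS
  | compl S _ ih => exact .compl S ih
  | iUnion ι f hι _ ih => exact .iUnion ι f (hι.trans h) ih
  | iInter ι f hι _ ih => exact .iInter ι f (hι.trans h) ih

theorem MuBorel2.inter (hμ : 2 ≤ μ) {S T : Set ((K → A) × (K → B))} (hS : MuBorel2 μ S)
    (hT : MuBorel2 μ T) : MuBorel2 μ (S ∩ T) := by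
  rw [inter_eq_iInter, ← (Equiv.ulift : ULift.{u} Bool ≃ Bool).surjective.iInter_comp]
  refine .iInter _ _ (by simpa using hμ) ?_
  rintro ⟨_ | _⟩
  exacts [hT, hS]

theorem MuBorel2.preimage {Φ : (K → A') × (K → B') → (K → A) × (K → B)}
    (hΦ : ∀ S, IsBasicOpen2 S → IsBasicOpen2 (Φ ⁻¹' S)) {S : Set ((K → A) × (K → B))}
    (hS : MuBorel2 μ S) : MuBorel2 μ (Φ ⁻¹' S) := by
  induction hS with
  | basic S hS => exact .basic _ (hΦ S hS)
  | compl S _ ih => exact .compl _ ih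
  | iUnion ι f hι _ ih => exact preimage_iUnion (f := Φ) ▸ .iUnion ι _ hι ih
  | iInter ι f hι _ ih => exact preimage_iInter (f := Φ) ▸ .iInter ι _ hι ih

theorem MuBorel2.muBorel_preimage {Φ : (K → A') → (K → A) × (K → B)}
    (hΦ : ∀ S, IsBasicOpen2 S → IsBasicOpen (Φ ⁻¹' S)) {S : Set ((K → A) × (K → B))}
    (hS : MuBorel2 μ S) : MuBorel μ (Φ ⁻¹' S) := by
  induction hS with
  | basic S hS => exact .basic _ (hΦ S hS)
  | compl S _ ih => exact .compl _ ih
  | iUnion ι f hι _ ih => exact preimage_iUnion (f := Φ) ▸ .iUnion ι _ hι ih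
  | iInter ι f hι _ ih => exact preimage_iInter (f := Φ) ▸ .iInter ι _ hι ih

end Pullback

section CodedUnion

variable {K : Type u} {A : Type v} {ι : Type u} (e : K ⊕ K ≃ K) (c : ι → K → K)

/-- The second coordinate `ξ` is read as the pair `(ξ ∘ e ∘ inl, ξ ∘ e ∘ inr)`: the first half
selects the index `i` through its code `c i`, the second half is the parameter for `R i`. -/
def codedUnion (R : ι → Set ((K → A) × (K → K))) : Set ((K → A) × (K → K)) :=
  ⋃ i, {q | q.2 ∘ e ∘ Sum.inl = c i} ∩ Prod.map id (· ∘ e ∘ Sum.inr) ⁻¹' R i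

variable {e c}

theorem mem_codedUnion_sumElim (hc : c.Injective) {R : ι → Set ((K → A) × (K → K))} {i : ι}
    {η : K → A} {ξ : K → K} :
    (η, Sum.elim (c i) ξ ∘ e.symm) ∈ codedUnion e c R ↔ (η, ξ) ∈ R i := by
  simp [codedUnion, Function.comp_def, hc.eq_iff]

theorem MuBorel2.codedUnion [Infinite K] {μ : Cardinal.{u}} (hι : #ι ≤ μ) (hK : #K ≤ μ)
    {R : ι → Set ((K → A) × (K → K))} (hR : ∀ i, MuBorel2 μ (R i)) :
    MuBorel2 μ (codedUnion e c R) := by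
  refine .iUnion _ _ hι fun i => .inter ?_ ?_ ?_
  · exact (natCast_lt_aleph0 (n := 2)).le.trans ((aleph0_le_mk K).trans hK)
  · have hcode : {q : (K → A) × (K → K) | q.2 ∘ e ∘ Sum.inl = c i} =
        ⋂ j, Set.univ ×ˢ {ξ | ξ (e (Sum.inl j)) = c i j} := by
      ext q
      simp [funext_iff]
    exact hcode ▸ .iInter _ _ hK fun j =>
      .basic _ ⟨Set.univ, _, isBasicOpen_univ, isBasicOpen_setOf_apply_eq _ _, rfl⟩
  · refine (hR i).preimage ?_
    rintro _ ⟨S₁, S₂, h₁, h₂, rfl⟩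
    exact ⟨S₁, _, h₁, h₂.preimage_comp (e.injective.comp Sum.inr_injective), rfl⟩

end CodedUnion

theorem exists_muBorel_not_muBorel_of_universal {K : Type u} [Infinite K] {μ μ' : Cardinal.{u}}
    {U : Set ((K → K) × (K → K))} (hU : MuBorel2 μ' U)
    (huniv : ∀ S : Set (K → K), MuBorel μ S → ∃ ξ : K → K, S = {η : K → K | (η, ξ) ∈ U}) :
    ∃ B : Set (K → K), MuBorel μ' B ∧ ¬ MuBorel μ B := by
  refine ⟨(fun η => (η, η)) ⁻¹' Uᶜ, hU.compl.muBorel_preimage ?_, fun hB => ?_⟩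
  · rintro _ ⟨S₁, S₂, h₁, h₂, rfl⟩
    exact h₁.inter h₂
  · obtain ⟨ξ, hξ⟩ := huniv _ hB
    exact not_iff_self (Set.ext_iff.mp hξ ξ)

theorem exists_muBorel2_succ_universal (K : Type u) [Infinite K]
    (R : Ordinal.{u} → Set ((K → K) × (K → K)))
    (hR1 : ∀ a : Ordinal.{u}, a < (Order.succ (#K)).ord → KBorel2 (R a))
    (hR2 : ∀ a : Ordinal.{u}, a < (Order.succ (#K)).ord →
      ∀ S ∈ Sig K a, ∃ ξ : K → K, S = {η : K → K | (η, ξ) ∈ R a}) :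
    ∃ U : Set ((K → K) × (K → K)), MuBorel2 (Order.succ (#K)) U ∧
      ∀ S : Set (K → K), MuBorel (#K) S → ∃ ξ : K → K, S = {η : K → K | (η, ξ) ∈ U} := by
  have hcard : #(Order.succ #K).ord.ToType = Order.succ #K := by simp
  obtain ⟨e⟩ : Nonempty (K ⊕ K ≃ K) := Cardinal.eq.mp (by simp [add_eq_self (aleph0_le_mk K)])
  obtain ⟨c⟩ : Nonempty ((Order.succ #K).ord.ToType ↪ (K → K)) := by
    refine (Cardinal.le_def _ _).mp ?_
    rw [hcard, ← power_def]
    exact Order.succ_le_of_lt ((cantor _).trans_le (power_le_power_right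
      ((natCast_lt_aleph0 (n := 2)).le.trans (aleph0_le_mk K))))
  refine ⟨codedUnion e c fun i => R i, MuBorel2.codedUnion hcard.le (Order.le_succ _)
    fun i => (hR1 i i.toOrd.2).mono (Order.le_succ _), fun S hS => ?_⟩
  obtain ⟨a, ha, hSa⟩ := hS.mem_sigHierarchy.1
  obtain ⟨ξ, rfl⟩ := hR2 a ha S hSa
  refine ⟨Sum.elim (c (Ordinal.ToType.mk ⟨a, ha⟩)) ξ ∘ e.symm, Set.ext fun η => ?_⟩
  simp [mem_codedUnion_sumElim c.injective]

theorem statement18_general (K : Type u) (hunc : ℵ₀ < #K)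
    (R : Ordinal.{u} → Set ((K → K) × (K → K)))
    (hR1 : ∀ a : Ordinal.{u}, a < (Order.succ (#K)).ord → KBorel2 (R a))
    (hR2 : ∀ a : Ordinal.{u}, a < (Order.succ (#K)).ord →
      ∀ S ∈ Sig K a, ∃ ξ : K → K, S = {η : K → K | (η, ξ) ∈ R a}) :
    (∃ U : Set ((K → K) × (K → K)), MuBorel2 (Order.succ (#K)) U ∧
      ∀ S : Set (K → K), MuBorel (#K) S → ∃ ξ : K → K, S = {η : K → K | (η, ξ) ∈ U}) ∧
    ∃ B : Set (K → K), MuBorel (Order.succ (#K)) B ∧ ¬ MuBorel (#K) B := by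
  have : Infinite K := Cardinal.infinite_iff.mpr hunc.le
  obtain ⟨U, hU, huniv⟩ := exists_muBorel2_succ_universal K R hR1 hR2
  exact ⟨⟨U, hU, huniv⟩, exists_muBorel_not_muBorel_of_universal hU huniv⟩

/-- Let κ be regular uncountable. Given, for each α < κ⁺, a κ-Borel set
R_α ⊆ κ^κ × κ^κ universal for κ-Σ_α, there is a (κ,κ⁺)-Borel subset of κ^κ × κ^κ universal
for the (κ,κ)-Borel subsets of κ^κ; consequently there is a (κ,κ⁺)-Borel set that is not
(κ,κ)-Borel. -/
theorem statement18 (K : Type u) (hreg : (#K).IsRegular) (hunc : ℵ₀ < #K)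
    (R : Ordinal.{u} → Set ((K → K) × (K → K)))
    (hR1 : ∀ a : Ordinal.{u}, a < (Order.succ (#K)).ord → KBorel2 (R a))
    (hR2 : ∀ a : Ordinal.{u}, a < (Order.succ (#K)).ord →
      ∀ S ∈ Sig K a, ∃ ξ : K → K, S = {η : K → K | (η, ξ) ∈ R a}) :
    (∃ U : Set ((K → K) × (K → K)), MuBorel2 (Order.succ (#K)) U ∧
      ∀ S : Set (K → K), MuBorel (#K) S → ∃ ξ : K → K, S = {η : K → K | (η, ξ) ∈ U}) ∧
    ∃ B : Set (K → K), MuBorel (Order.succ (#K)) B ∧ ¬ MuBorel (#K) B :=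
  statement18_general K hunc R hR1 hR2

end GDST
end
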